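/- arXiv:1612.01960 — 2 statements merged into one kernel-verified Lean document; each statement's English description precedes it below -/
import Mathlib

section
/- Let n > 1 and let a be an integer with 0 < a < n, gcd(a,n) = 1, and a ≢ 1 (mod n). Then s(1,1;n) > 2·s(1,a;n). -/
/-!
Put `g(a, n) = ∑_{i<n} i · (i a mod n)` (`mulModSum a n`). Then
`4 n² s(1, a; n) = 4 g(a, n) - n² (n - 1)` and `6 g(1, n) = n (n - 1) (2 n - 1)`, so the claim is
`24 g(a, n) < n (n - 1) (7 n - 2)` for `1 < a < n` coprime to `n`. Counting the lattice points
below the line `y = a x / n` in two ways gives a reciprocity law (Dedekind reciprocity in disguise)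
`12 a² g(a, n) + 12 n² g(n, a) = 3 a² n² (a + n - 3) + a n (a² + n² + 1)`.
Since `g(n, a) = g(b, a)` with `b = n mod a`, and `g(b, a) + g(a - b, a) = a² (a - 1) / 2`, the
bound for `(a, n)` follows from the bound for `(a - b, a)`, by strong induction on `n`; when
`a - b = 1` the value `g(1, a)` is known exactly instead, and `n ≡ -1 (mod a)` forces `n ≥ 2a - 1`.
-/

/-- The sawtooth function `((x)) = x - ⌊x⌋ - 1/2` for non-integer `x`, and `0` for integer `x`. -/
def saw (x : ℚ) : ℚ := if x.den = 1 then 0 else x - ⌊x⌋ - 1/2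

/-- The generalized Dedekind sum `s(a,b;n) = ∑_{i=1}^{n-1} ((ia/n))((ib/n))`. -/
def dS (a b : ℤ) (n : ℕ) : ℚ :=
  ∑ i ∈ Finset.range n, saw (i * a / n) * saw (i * b / n)

open Finset

lemma two_mul_sum_range_id (n : ℕ) : 2 * ∑ i ∈ range n, (i : ℤ) = n * (n - 1) := by
  induction n with
  | zero => simp
  | succ n ih => rw [sum_range_succ, mul_add, ih]; push_cast; ring

lemma six_mul_sum_range_sq (n : ℕ) :
    6 * ∑ i ∈ range n, (i : ℤ) ^ 2 = n * (n - 1) * (2 * n - 1) := by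
  induction n with
  | zero => simp
  | succ n ih => rw [sum_range_succ, mul_add, ih]; push_cast; ring

lemma sum_range_comp_mul_mod {M : Type*} [AddCommMonoid M] {a n : ℕ} (h : a.Coprime n)
    (f : ℕ → M) : ∑ i ∈ range n, f (i * a % n) = ∑ i ∈ range n, f i := by
  have hmaps : Set.MapsTo (· * a % n) (range n : Set ℕ) (range n) := fun i hi ↦
    mem_range.2 (Nat.mod_lt _ (Nat.zero_lt_of_lt (mem_range.1 hi)))
  have hinj : Set.InjOn (· * a % n) (range n : Set ℕ) := fun i hi j hj hij ↦
    (Nat.ModEq.cancel_right_of_coprime h.symm hij).eq_of_lt_of_lt (by simpa using hi)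
      (by simpa using hj)
  exact sum_nbij (· * a % n) (fun _ hi ↦ hmaps hi) hinj
    (surjOn_of_injOn_of_card_le _ hmaps hinj le_rfl) fun _ _ ↦ rfl

lemma mul_mod_pos_of_coprime {a n i : ℕ} (h : a.Coprime n) (hi : 0 < i) (hin : i < n) :
    0 < i * a % n := by
  refine Nat.pos_of_ne_zero fun h0 ↦ ?_
  have := Nat.le_of_dvd hi (h.symm.dvd_of_dvd_mul_right (Nat.dvd_of_mod_eq_zero h0))
  omega

def mulModSum (a n : ℕ) : ℤ := ∑ i ∈ range n, (i : ℤ) * (i * a % n : ℕ)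

lemma mulModSum_one (n : ℕ) : mulModSum 1 n = ∑ i ∈ range n, (i : ℤ) ^ 2 :=
  sum_congr rfl fun i hi ↦ by rw [mul_one, Nat.mod_eq_of_lt (mem_range.1 hi), sq]

lemma mulModSum_mod (a n : ℕ) : mulModSum (a % n) n = mulModSum a n := by
  simp only [mulModSum, Nat.mul_mod_mod]

lemma mul_sub_mod_add_mul_mod {a n i : ℕ} (h : a.Coprime n) (han : a < n) (hi : 0 < i)
    (hin : i < n) : i * (n - a) % n + i * a % n = n := by
  refine Nat.eq_of_dvd_of_lt_two_mul (by have := mul_mod_pos_of_coprime h hi hin; omega) ?_ ?_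
  · exact Nat.dvd_of_mod_eq_zero <| by
      rw [← Nat.add_mod, ← Nat.mul_add, Nat.sub_add_cancel han.le, Nat.mul_mod_left]
  · have := Nat.mod_lt (i * (n - a)) (by omega : 0 < n)
    have := Nat.mod_lt (i * a) (by omega : 0 < n)
    omega

lemma mulModSum_sub_add_mulModSum {a n : ℕ} (h : a.Coprime n) (han : a < n) :
    2 * (mulModSum (n - a) n + mulModSum a n) = n ^ 2 * (n - 1) := by
  have hterm : ∀ i ∈ range n,
      (i : ℤ) * (i * (n - a) % n : ℕ) + i * (i * a % n : ℕ) = i * n := by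
    intro i hi
    rcases Nat.eq_zero_or_pos i with rfl | hi0
    · simp
    rw [← mul_add, ← Nat.cast_add, mul_sub_mod_add_mul_mod h han hi0 (mem_range.1 hi)]
  rw [mulModSum, mulModSum, ← sum_add_distrib, sum_congr rfl hterm, ← sum_mul]
  linear_combination (n : ℤ) * two_mul_sum_range_id n

lemma natCast_mul_card_filter_mul_lt {a n i : ℕ} (h : a.Coprime n) (hi : 0 < i)
    (hin : i < n) :
    (n : ℤ) * #{j ∈ range a | j * n < i * a} = i * a + n - (i * a % n : ℕ) := by
  have hn : 0 < n := hi.trans hin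
  have ha : 0 < a := Nat.pos_of_ne_zero fun h0 ↦ by simpa [h0] using mul_mod_pos_of_coprime h hi hin
  have hne : ∀ j, j * n ≠ i * a := fun j hj ↦
    (mul_mod_pos_of_coprime h hi hin).ne' (by rw [← hj, Nat.mul_mod_left])
  have hfilter : {j ∈ range a | j * n < i * a} = range (i * a / n + 1) := by
    ext j
    have hdiv : i * a / n < a := (Nat.div_lt_iff_lt_mul hn).2 (by nlinarith)
    simp only [mem_filter, mem_range, Nat.lt_succ_iff]
    refine ⟨fun ⟨_, hj⟩ ↦ (Nat.le_div_iff_mul_le hn).2 hj.le, fun hj ↦ ⟨by omega, ?_⟩⟩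
    exact lt_of_le_of_ne ((Nat.le_div_iff_mul_le hn).1 hj) (hne j)
  have := congrArg (Nat.cast : ℕ → ℤ) (Nat.div_add_mod (i * a) n)
  push_cast [hfilter, card_range] at this ⊢
  linear_combination this

lemma two_mul_sum_filter_mul_lt {a n j : ℕ} (hn : 0 < n) (hj : j < a) :
    2 * ∑ i ∈ range n with j * n < i * a, (i : ℤ) =
      n * (n - 1) - (j * n / a : ℕ) * ((j * n / a : ℕ) + 1) := by
  have ha : 0 < a := by omega
  have hle : j * n / a + 1 ≤ n := (Nat.div_lt_iff_lt_mul ha).2 (by nlinarith)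
  have hfilter : {i ∈ range n | j * n < i * a} = Ico (j * n / a + 1) n := by
    ext i
    simp only [mem_filter, mem_range, mem_Ico, Nat.succ_le_iff, Nat.div_lt_iff_lt_mul ha]
    exact and_comm
  rw [hfilter, sum_Ico_eq_sub _ hle, mul_sub, two_mul_sum_range_id, two_mul_sum_range_id]
  push_cast
  ring

lemma sum_mul_card_filter_eq_sum_sum_filter (a n : ℕ) :
    ∑ i ∈ range n, (i : ℤ) * #{j ∈ range a | j * n < i * a} =
      ∑ j ∈ range a, ∑ i ∈ range n with j * n < i * a, (i : ℤ) := by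
  simp only [card_filter, Nat.cast_sum, mul_sum, sum_filter]
  rw [sum_comm]
  simp

-- Weight the lattice points `(i, j) ∈ [0, n) × [0, a)` with `j n < i a` by `i`, and sum them
-- by columns and by rows.
lemma two_mul_mulModSum {a n : ℕ} (h : a.Coprime n) :
    2 * mulModSum a n = 2 * a * ∑ i ∈ range n, (i : ℤ) ^ 2 - (a - 1) * n ^ 2 * (n - 1) +
      n * ∑ j ∈ range a, ((j * n / a : ℕ) : ℤ) * ((j * n / a : ℕ) + 1) := by
  rcases n.eq_zero_or_pos with rfl | hn
  · simp [mulModSum]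
  have hexpand : ∑ i ∈ range n, (i : ℤ) * (i * a + n - (i * a % n : ℕ)) =
      a * ∑ i ∈ range n, (i : ℤ) ^ 2 + n * ∑ i ∈ range n, (i : ℤ) - mulModSum a n := by
    simp only [mulModSum, mul_sum, ← sum_add_distrib, ← sum_sub_distrib]
    exact sum_congr rfl fun i _ ↦ by ring
  have hcount : ∑ i ∈ range n, (i : ℤ) * (i * a + n - (i * a % n : ℕ)) =
      n * ∑ j ∈ range a, ∑ i ∈ range n with j * n < i * a, (i : ℤ) := by
    rw [← sum_mul_card_filter_eq_sum_sum_filter, mul_sum]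
    refine sum_congr rfl fun i hi ↦ ?_
    rcases i.eq_zero_or_pos with rfl | hi0
    · simp
    rw [mul_left_comm, natCast_mul_card_filter_mul_lt h hi0 (mem_range.1 hi)]
  have hrows : 2 * ∑ j ∈ range a, ∑ i ∈ range n with j * n < i * a, (i : ℤ) =
      a * (n * (n - 1)) - ∑ j ∈ range a, ((j * n / a : ℕ) : ℤ) * ((j * n / a : ℕ) + 1) := by
    rw [mul_sum, sum_congr rfl fun j hj ↦ two_mul_sum_filter_mul_lt hn (mem_range.1 hj),
      sum_sub_distrib, sum_const, card_range, nsmul_eq_mul]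
  linear_combination
    2 * hexpand - 2 * hcount - (n : ℤ) * hrows + (n : ℤ) * two_mul_sum_range_id n

lemma sq_mul_sum_div_mul_succ {a n : ℕ} (h : n.Coprime a) :
    (a : ℤ) ^ 2 * ∑ j ∈ range a, ((j * n / a : ℕ) : ℤ) * ((j * n / a : ℕ) + 1) =
      (n ^ 2 + 1) * ∑ j ∈ range a, (j : ℤ) ^ 2 - 2 * n * mulModSum n a +
        a * (n - 1) * ∑ j ∈ range a, (j : ℤ) := by
  have hdiv : ∀ j : ℕ, (a : ℤ) * (j * n / a : ℕ) = j * n - (j * n % a : ℕ) := fun j ↦ by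
    have := congrArg (Nat.cast : ℕ → ℤ) (Nat.div_add_mod (j * n) a)
    push_cast at this ⊢
    linear_combination this
  have hres : ∑ j ∈ range a, ((j * n % a : ℕ) : ℤ) = ∑ j ∈ range a, (j : ℤ) :=
    sum_range_comp_mul_mod h fun x ↦ (x : ℤ)
  have hres_sq : ∑ j ∈ range a, ((j * n % a : ℕ) : ℤ) ^ 2 = ∑ j ∈ range a, (j : ℤ) ^ 2 :=
    sum_range_comp_mul_mod h fun x ↦ (x : ℤ) ^ 2
  calc (a : ℤ) ^ 2 * ∑ j ∈ range a, ((j * n / a : ℕ) : ℤ) * ((j * n / a : ℕ) + 1)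
      = ∑ j ∈ range a, (((j : ℤ) * n - (j * n % a : ℕ)) ^ 2 +
          a * ((j : ℤ) * n - (j * n % a : ℕ))) := by
        rw [mul_sum]
        exact sum_congr rfl fun j _ ↦ by rw [← hdiv]; ring
    _ = n ^ 2 * ∑ j ∈ range a, (j : ℤ) ^ 2 - 2 * n * mulModSum n a +
          ∑ j ∈ range a, ((j * n % a : ℕ) : ℤ) ^ 2 + a * n * ∑ j ∈ range a, (j : ℤ) -
          a * ∑ j ∈ range a, ((j * n % a : ℕ) : ℤ) := by
        simp only [mulModSum, mul_sum, ← sum_add_distrib, ← sum_sub_distrib]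
        exact sum_congr rfl fun _ _ ↦ by ring
    _ = _ := by rw [hres, hres_sq]; ring

lemma mulModSum_reciprocity {a n : ℕ} (h : a.Coprime n) :
    12 * a ^ 2 * mulModSum a n + 12 * n ^ 2 * mulModSum n a =
      3 * a ^ 2 * n ^ 2 * (a + n - 3) + a * n * (a ^ 2 + n ^ 2 + 1) := by
  linear_combination 6 * (a : ℤ) ^ 2 * two_mul_mulModSum h +
    6 * (n : ℤ) * sq_mul_sum_div_mul_succ h.symm + 2 * (a : ℤ) ^ 3 * six_mul_sum_range_sq n +
    n * (n ^ 2 + 1) * six_mul_sum_range_sq a + 3 * (a : ℤ) * n * (n - 1) * two_mul_sum_range_id a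

lemma reciprocity_bound_of_lt {a n X Y : ℤ} (ha : 3 ≤ a) (han : a < n)
    (hrec : 12 * a ^ 2 * X = 3 * a ^ 2 * n ^ 2 * (a + n - 3) + a * n * (a ^ 2 + n ^ 2 + 1) -
      6 * n ^ 2 * a ^ 2 * (a - 1) + 12 * n ^ 2 * Y)
    (hY : 24 * Y < a * (a - 1) * (7 * a - 2)) :
    24 * X < n * (n - 1) * (7 * n - 2) := by
  have ht : 0 ≤ n - a - 1 := by linarith
  have hquad : 0 ≤ (n - a - 1) ^ 2 * (a - 2) + (n - a - 1) * (a ^ 2 + 4 * a - 6) +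
      3 * a ^ 2 + 3 * a - 6 := by
    have h1 := mul_nonneg (sq_nonneg (n - a - 1)) (by linarith : (0 : ℤ) ≤ a - 2)
    have h2 := mul_nonneg ht (by nlinarith : (0 : ℤ) ≤ a ^ 2 + 4 * a - 6)
    nlinarith
  have hgap := mul_nonneg (by nlinarith : (0 : ℤ) ≤ a * n) hquad
  have hYn := mul_lt_mul_of_pos_left hY (pow_pos (by linarith : (0 : ℤ) < n) 2)
  refine lt_of_mul_lt_mul_left (a := a ^ 2) ?_ (sq_nonneg a)
  linarith

lemma reciprocity_bound_of_eq {a n X Y : ℤ} (ha : 2 ≤ a) (han : 2 * a - 1 ≤ n)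
    (hrec : 12 * a ^ 2 * X = 3 * a ^ 2 * n ^ 2 * (a + n - 3) + a * n * (a ^ 2 + n ^ 2 + 1) -
      6 * n ^ 2 * a ^ 2 * (a - 1) + 12 * n ^ 2 * Y)
    (hY : 6 * Y = a * (a - 1) * (2 * a - 1)) :
    24 * X < n * (n - 1) * (7 * n - 2) := by
  have ht : 0 ≤ n - 2 * a + 1 := by linarith
  have hquad : 0 < (n - 2 * a + 1) ^ 2 * (a - 2) + (n - 2 * a + 1) * (2 * a ^ 2 - a) +
      6 * a * (a - 1) := by
    have h1 := mul_nonneg (sq_nonneg (n - 2 * a + 1)) (by linarith : (0 : ℤ) ≤ a - 2)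
    have h2 := mul_nonneg ht (by nlinarith : (0 : ℤ) ≤ 2 * a ^ 2 - a)
    nlinarith
  have hgap := mul_pos (by nlinarith : (0 : ℤ) < a * n) hquad
  refine lt_of_mul_lt_mul_left (a := a ^ 2) ?_ (sq_nonneg a)
  linear_combination 2 * hrec + 4 * n ^ 2 * hY + hgap

theorem mulModSum_lt {a n : ℕ} (ha : 1 < a) (han : a < n) (h : a.Coprime n) :
    24 * mulModSum a n < n * (n - 1) * (7 * n - 2) := by
  induction n using Nat.strong_induction_on generalizing a with
  | _ n ih =>
  set b := n % a with hb
  have hb0 : 0 < b := Nat.pos_of_ne_zero fun h0 ↦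
    ha.ne' (Nat.Coprime.eq_one_of_dvd h (Nat.dvd_of_mod_eq_zero h0))
  have hba : b < a := Nat.mod_lt _ (by omega)
  have hcop : b.Coprime a := by rw [Nat.Coprime, hb, ← Nat.gcd_rec]; exact h
  have hrec := mulModSum_reciprocity h
  rw [← mulModSum_mod n a] at hrec
  have hsym := mulModSum_sub_add_mulModSum hcop hba
  rcases (by omega : a - b = 1 ∨ 1 < a - b) with hab | hab
  · -- `n ≡ -1 (mod a)`, so `n ≥ 2 a - 1`
    rw [hab, mulModSum_one] at hsym
    have hquot : a ≤ a * (n / a) := Nat.le_mul_of_pos_right _ (Nat.div_pos han.le (by omega))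
    have hdiv := Nat.div_add_mod n a
    refine reciprocity_bound_of_eq (by exact_mod_cast ha) (by omega) ?_ (six_mul_sum_range_sq a)
    linear_combination hrec - 6 * (n : ℤ) ^ 2 * hsym
  · have hY := ih a han hab (by omega) ((Nat.coprime_self_sub_left hba.le).2 hcop)
    refine reciprocity_bound_of_lt (by omega) (by exact_mod_cast han) ?_ hY
    linear_combination hrec - 6 * (n : ℤ) ^ 2 * hsym

lemma two_mul_natCast_mul_saw_div {m n : ℕ} (hn : n ≠ 0) (hm : ¬ n ∣ m) :
    2 * n * saw (m / n) = 2 * (m % n : ℕ) - n := by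
  rw [saw, if_neg (by rwa [Rat.den_div_natCast_eq_one_iff m n hn]),
    Rat.floor_natCast_div_natCast, ← Int.natCast_div, Int.cast_natCast]
  have := congrArg (Nat.cast : ℕ → ℚ) (Nat.div_add_mod m n)
  push_cast at this
  field_simp
  linear_combination -2 * this

lemma four_mul_sq_mul_saw_mul_saw {a n i : ℕ} (h : a.Coprime n) (hi : 0 < i) (hin : i < n) :
    4 * n ^ 2 * (saw (i / n) * saw ((i * a : ℕ) / n)) =
      (2 * i - n) * (2 * (i * a % n : ℕ) - n) := by
  have hn : n ≠ 0 := by omega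
  have hni : ¬ n ∣ i := fun hd ↦ by have := Nat.le_of_dvd hi hd; omega
  have hnia : ¬ n ∣ i * a := fun hd ↦
    (mul_mod_pos_of_coprime h hi hin).ne' (Nat.mod_eq_zero_of_dvd hd)
  have hsaw_i := two_mul_natCast_mul_saw_div hn hni
  rw [Nat.mod_eq_of_lt hin] at hsaw_i
  rw [← hsaw_i, ← two_mul_natCast_mul_saw_div hn hnia]
  ring

lemma four_mul_sq_mul_dS_one {a n : ℕ} (h : a.Coprime n) :
    4 * n ^ 2 * dS 1 a n = 4 * mulModSum a n - n ^ 2 * (n - 1) := by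
  rcases n.eq_zero_or_pos with rfl | hn
  · simp [dS, mulModSum]
  have hterm : ∀ i ∈ range n,
      4 * (n : ℚ) ^ 2 * (saw (i * (1 : ℤ) / n) * saw (i * (a : ℤ) / n)) =
        (2 * i - n) * (2 * (i * a % n : ℕ) - n) - if i = 0 then (n : ℚ) ^ 2 else 0 := by
    intro i hi
    rcases i.eq_zero_or_pos with rfl | hi0
    · simp [saw, sq]
    rw [if_neg hi0.ne', sub_zero, ← four_mul_sq_mul_saw_mul_saw h hi0 (mem_range.1 hi)]
    push_cast [mul_one]
    rfl
  have hexpand : ∑ i ∈ range n, (2 * (i : ℚ) - n) * (2 * (i * a % n : ℕ) - n) =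
      4 * mulModSum a n - 2 * n * ∑ i ∈ range n, (i : ℚ) -
        2 * n * ∑ i ∈ range n, ((i * a % n : ℕ) : ℚ) + ∑ i ∈ range n, (n : ℚ) ^ 2 := by
    simp only [mulModSum, Int.cast_sum, Int.cast_mul, Int.cast_natCast, mul_sum,
      ← sum_add_distrib, ← sum_sub_distrib]
    exact sum_congr rfl fun i _ ↦ by ring
  have hT := congrArg (Int.cast : ℤ → ℚ) (two_mul_sum_range_id n)
  push_cast at hT
  rw [dS, mul_sum, sum_congr rfl hterm, sum_sub_distrib, hexpand, sum_ite_eq' (range n) 0,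
    if_pos (mem_range.2 hn), sum_range_comp_mul_mod h (fun x ↦ (x : ℚ)), sum_const, card_range,
    nsmul_eq_mul]
  linear_combination -2 * (n : ℚ) * hT

theorem stmt_8_general (n : ℕ) (a : ℤ) (ha0 : 0 < a) (han : a < (n:ℤ))
    (hco : Int.gcd a n = 1) (hne1 : ¬ a ≡ 1 [ZMOD (n:ℤ)]) :
    2 * dS 1 a n < dS 1 1 n := by
  lift a to ℕ using ha0.le
  rw [Int.gcd_natCast_natCast] at hco
  have ha1 : a ≠ 1 := by rintro rfl; exact hne1 rfl
  have hbound : 24 * (mulModSum a n : ℚ) < n * (n - 1) * (7 * n - 2) := by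
    exact_mod_cast mulModSum_lt (by omega) (by omega) hco
  have hsum_sq := congrArg (Int.cast : ℤ → ℚ) (six_mul_sum_range_sq n)
  push_cast at hsum_sq
  have hdS := four_mul_sq_mul_dS_one hco
  have hdS_one := four_mul_sq_mul_dS_one (Nat.coprime_one_left n)
  rw [Nat.cast_one, mulModSum_one] at hdS_one
  push_cast at hdS_one
  refine lt_of_mul_lt_mul_left (a := 4 * (n : ℚ) ^ 2) ?_ (by positivity)
  linarith

theorem stmt_8 (n : ℕ) (hn : 1 < n) (a : ℤ) (ha0 : 0 < a) (han : a < (n:ℤ))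
    (hco : Int.gcd a n = 1) (hne1 : ¬ a ≡ 1 [ZMOD (n:ℤ)]) :
    2 * dS 1 a n < dS 1 1 n :=
  stmt_8_general n a ha0 han hco hne1
end

section
/- For every integer n > 7 coprime to 6, 2·s(1,1;n) - s(1,2;n) - s(1,3;n) - s(1,4;n) + s(1,6;n) - s(1, 2·3⁻¹; n) + s(1, 4·3⁻¹; n) > 0. -/
/-!
Multiplying the summation index by `3` (a unit mod `n`) turns `s(1, 2·3⁻¹; n)` and
`s(1, 4·3⁻¹; n)` into `s(3, 2; n)` and `s(3, 4; n)`, so the whole combination becomes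
`∑ i < n, F (i / n)` for one function `F` built from `((j x))` with `j ∣ 12`. On each
twelfth `(k/12, (k+1)/12)` of the unit interval every `((j x))` is affine, so `F` is a
quadratic `5 x² + b_k x + c_k` there, and since `gcd(n, 12) = 1` no point `i / n` lies on a
breakpoint. Summing these quadratics over the twelve blocks of indices gives exactly
`⌊n/12⌋`, or `⌊n/12⌋ + 1` when `n ≡ 2 (mod 3)`, which is positive for `n > 7`.
-/

open Finset

lemma saw_add_intCast (x : ℚ) (t : ℤ) : saw (x + t) = saw x := by
  simp only [saw, Rat.add_intCast_den, Int.floor_add_intCast]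
  split_ifs <;> push_cast <;> ring

lemma saw_of_lt_of_lt {x : ℚ} {j : ℤ} (h₁ : j < x) (h₂ : x < j + 1) : saw x = x - j - 1 / 2 := by
  have hden : x.den ≠ 1 := by
    intro h
    rw [← Rat.den_eq_one_iff x |>.mp h] at h₁ h₂
    norm_cast at h₁ h₂
    omega
  simp [saw, hden, Int.floor_eq_iff.mpr ⟨h₁.le, h₂⟩]

lemma saw_intCast_div_congr {a b : ℤ} {n : ℕ} (h : a ≡ b [ZMOD n]) :
    saw (a / n) = saw (b / n) := by
  rcases eq_or_ne n 0 with rfl | hn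
  · simp
  obtain ⟨t, ht⟩ := h.dvd
  have hb : (b : ℚ) / n = a / n + t := by
    rw [show (b : ℚ) = a + n * t by exact_mod_cast (by omega : b = a + n * t)]
    field_simp
  rw [hb, saw_add_intCast]

lemma mul_mod_mul_mod_of_mul_mod_eq_one {n u v a : ℕ} (huv : v * u % n = 1) (ha : a < n) :
    v * (u * a % n) % n = a := by
  rw [Nat.mul_mod_mod, ← mul_assoc, Nat.mul_mod, huv, one_mul, Nat.mod_mod, Nat.mod_eq_of_lt ha]

lemma dS_eq_of_modEq_mul {n u : ℕ} (hu : u.Coprime n) {a b a' b' : ℤ}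
    (ha : a' ≡ u * a [ZMOD n]) (hb : b' ≡ u * b [ZMOD n]) : dS a' b' n = dS a b n := by
  rcases Nat.lt_or_ge 1 n with hn | hn
  swap
  · interval_cases n <;> simp [dS]
  obtain ⟨v, -, hv⟩ := Nat.exists_mul_mod_eq_one_of_coprime hu hn
  have hsaw : ∀ (i : ℕ) {x x' : ℤ}, x' ≡ u * x [ZMOD n] →
      saw (i * x' / n) = saw ((u * i % n : ℕ) * x / n) := by
    intro i x x' hx
    have hcongr : ((u * i % n : ℕ) : ℤ) * x ≡ i * x' [ZMOD n] := calc
      ((u * i % n : ℕ) : ℤ) * x ≡ (u * i) * x [ZMOD n] := by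
        push_cast; exact (Int.mod_modEq _ _).mul_right x
      _ = i * (u * x) := by ring
      _ ≡ i * x' [ZMOD n] := (hx.symm.mul_left i)
    simpa only [Int.cast_mul, Int.cast_natCast] using (saw_intCast_div_congr hcongr).symm
  refine sum_nbij' (fun i ↦ u * i % n) (fun j ↦ v * j % n) ?_ ?_ ?_ ?_ ?_
  · exact fun i _ ↦ mem_range.2 (Nat.mod_lt _ (by omega))
  · exact fun i _ ↦ mem_range.2 (Nat.mod_lt _ (by omega))
  · exact fun i hi ↦ mul_mod_mul_mod_of_mul_mod_eq_one (by rwa [mul_comm]) (mem_range.1 hi)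
  · exact fun i hi ↦ mul_mod_mul_mod_of_mul_mod_eq_one hv (mem_range.1 hi)
  · intro i _
    rw [hsaw i ha, hsaw i hb]

def sawComb (x : ℚ) : ℚ :=
  2 * saw x * saw x - saw x * saw (2 * x) - saw x * saw (3 * x) - saw x * saw (4 * x)
    + saw x * saw (6 * x) - saw (3 * x) * saw (2 * x) + saw (3 * x) * saw (4 * x)

lemma dS_comb_eq_sum_sawComb (n : ℕ) :
    2 * dS 1 1 n - dS 1 2 n - dS 1 3 n - dS 1 4 n + dS 1 6 n - dS 3 2 n + dS 3 4 n
      = ∑ i ∈ range n, sawComb (i / n) := by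
  simp only [dS, sawComb, mul_sum, ← sum_sub_distrib, ← sum_add_distrib]
  refine sum_congr rfl fun i _ ↦ ?_
  push_cast
  ring_nf

/-- `⌊j x⌋ + 1/2` for `x` in the open interval `(k/12, (k+1)/12)`, when `j ∣ 12`. -/
def shift (k j : ℕ) : ℚ := (j * k / 12 : ℕ) + 1 / 2

lemma saw_mul_eq_sub_shift {j k : ℕ} (hj : j ∣ 12) {x : ℚ} (h₁ : k < 12 * x)
    (h₂ : 12 * x < k + 1) : saw (j * x) = j * x - shift k j := by
  obtain ⟨d, hd⟩ := hj
  have hj0 : 0 < j := Nat.pos_of_ne_zero (by rintro rfl; omega)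
  have hfloor : j * k / 12 = k / d := by rw [hd, Nat.mul_div_mul_left _ _ hj0]
  have hlow : 12 * (j * k / 12) ≤ j * k := Nat.mul_div_le _ _
  have hhigh : j * (k + 1) ≤ 12 * (j * k / 12 + 1) := by
    rw [hfloor, hd, mul_assoc]
    exact Nat.mul_le_mul_left _ (Nat.lt_mul_div_succ k (Nat.pos_of_ne_zero (by rintro rfl; omega)))
  have hlowQ : (12 : ℚ) * (j * k / 12 : ℕ) ≤ j * k := by exact_mod_cast hlow
  have hhighQ : (j : ℚ) * (k + 1) ≤ 12 * ((j * k / 12 : ℕ) + 1) := by exact_mod_cast hhigh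
  have hjQ : (0 : ℚ) < j := by exact_mod_cast hj0
  rw [shift, ← sub_sub, ← Int.cast_natCast (R := ℚ) (j * k / 12 : ℕ)]
  apply saw_of_lt_of_lt <;> rw [Int.cast_natCast] <;> nlinarith

/-- `sawComb` with each `saw (j * x)` replaced by `j * x - shift k j`, expanded in powers of `x`. -/
def blockPoly (k : ℕ) (x : ℚ) : ℚ :=
  5 * x ^ 2 + (4 * shift k 2 - shift k 1 - shift k 3 - 2 * shift k 4 - shift k 6) * x
    + (2 * shift k 1 ^ 2 - shift k 1 * shift k 2 - shift k 1 * shift k 3 - shift k 1 * shift k 4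
      + shift k 1 * shift k 6 - shift k 3 * shift k 2 + shift k 3 * shift k 4)

lemma sawComb_eq_blockPoly {k : ℕ} {x : ℚ} (h₁ : k < 12 * x) (h₂ : 12 * x < k + 1) :
    sawComb x = blockPoly k x := by
  have e1 : saw x = x - shift k 1 := by
    simpa only [Nat.cast_one, one_mul] using saw_mul_eq_sub_shift (one_dvd 12) h₁ h₂
  have e : ∀ j : ℕ, j ∣ 12 → saw (j * x) = j * x - shift k j :=
    fun j hj ↦ saw_mul_eq_sub_shift hj h₁ h₂
  have e2 := e 2 (by norm_num)
  have e3 := e 3 (by norm_num)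
  have e4 := e 4 (by norm_num)
  have e6 := e 6 (by norm_num)
  simp only [Nat.cast_ofNat] at e2 e3 e4 e6
  rw [sawComb, blockPoly, e1, e2, e3, e4, e6]
  ring

def blockStart (n k : ℕ) : ℕ := (k * n + 11) / 12

lemma blockStart_mono (n : ℕ) : Monotone (blockStart n) :=
  fun _ _ h ↦ Nat.div_le_div_right (by gcongr)

lemma mul_lt_lt_mul_of_mem_block {n k i : ℕ} (hn : Nat.Coprime 12 n) (hk : k < 12)
    (hi : i ∈ Ico (blockStart n k) (blockStart n (k + 1))) (hi0 : i ≠ 0) :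
    k * n < 12 * i ∧ 12 * i < (k + 1) * n := by
  simp only [mem_Ico, blockStart, add_mul, one_mul] at hi
  have hne : k * n ≠ 12 * i := by
    intro h
    obtain rfl : k = 0 := by have : 12 ∣ k := hn.dvd_of_dvd_mul_right ⟨i, h⟩; omega
    omega
  rw [add_mul, one_mul]
  omega

lemma sawComb_div_eq_blockPoly {n k i : ℕ} (hn : Nat.Coprime 12 n) (hk : k < 12)
    (hi : i ∈ Ico (blockStart n k) (blockStart n (k + 1))) :
    sawComb (i / n) = blockPoly k (i / n) := by
  have hn0 : 0 < n := Nat.pos_of_ne_zero (by rintro rfl; norm_num at hn)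
  rcases eq_or_ne i 0 with rfl | hi0
  -- At `x = 0` every `saw` vanishes, and so does `blockPoly 0 0`: the coefficients of the
  -- combination sum to zero.
  · obtain rfl : k = 0 := by
      have : k * n = 0 := by simp only [mem_Ico, blockStart] at hi; omega
      simpa [hn0.ne'] using this
    norm_num [sawComb, blockPoly, shift, saw]
  obtain ⟨h₁, h₂⟩ := mul_lt_lt_mul_of_mem_block hn hk hi hi0
  have hnQ : (0 : ℚ) < n := by exact_mod_cast hn0
  apply sawComb_eq_blockPoly
  · rw [mul_div_assoc', lt_div_iff₀ hnQ]; exact_mod_cast h₁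
  · rw [mul_div_assoc', div_lt_iff₀ hnQ]; exact_mod_cast h₂

lemma sum_Ico_eq_sum_range_sum_Ico {M : Type*} [AddCommMonoid M] (f : ℕ → M) {a : ℕ → ℕ}
    (ha : Monotone a) (K : ℕ) :
    ∑ i ∈ Ico (a 0) (a K), f i = ∑ k ∈ range K, ∑ i ∈ Ico (a k) (a (k + 1)), f i := by
  induction K with
  | zero => simp
  | succ K ih => rw [sum_range_succ, ← ih, sum_Ico_consecutive _ (ha K.zero_le) (ha K.le_succ)]

lemma sum_sawComb_eq_sum_blocks {n : ℕ} (hn : Nat.Coprime 12 n) :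
    ∑ i ∈ range n, sawComb (i / n) =
      ∑ k ∈ range 12, ∑ i ∈ Ico (blockStart n k) (blockStart n (k + 1)), blockPoly k (i / n) := by
  calc ∑ i ∈ range n, sawComb (i / n)
      = ∑ i ∈ Ico (blockStart n 0) (blockStart n 12), sawComb (i / n) := by
        rw [range_eq_Ico, blockStart, blockStart]; congr 2 <;> omega
    _ = _ := sum_Ico_eq_sum_range_sum_Ico _ (blockStart_mono n) 12
    _ = _ := sum_congr rfl fun k hk ↦ sum_congr rfl fun i hi ↦
        sawComb_div_eq_blockPoly hn (mem_range.1 hk) hi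

lemma sum_range_quadratic (A B C : ℚ) (n t : ℕ) :
    ∑ i ∈ range t, (A * (i / n : ℚ) ^ 2 + B * (i / n) + C) =
      A * (t * (t - 1) * (2 * t - 1) / (6 * n ^ 2)) + B * (t * (t - 1) / (2 * n)) + C * t := by
  induction t with
  | zero => simp
  | succ t ih => rw [sum_range_succ, ih]; push_cast; ring

lemma blockStart_twelve_mul_add (m r k : ℕ) :
    blockStart (12 * m + r) k = k * m + (k * r + 11) / 12 := by
  rw [blockStart, show k * (12 * m + r) + 11 = k * r + 11 + 12 * (k * m) by ring,
    Nat.add_mul_div_left _ _ (by norm_num), add_comm]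

set_option maxHeartbeats 1000000 in
lemma sum_sawComb_twelve_mul_add (m r : ℕ) (hr : r = 1 ∨ r = 5 ∨ r = 7 ∨ r = 11) :
    ∑ i ∈ range (12 * m + r), sawComb (i / ↑(12 * m + r)) = m + if r % 3 = 1 then 0 else 1 := by
  have hcop : Nat.Coprime 12 (12 * m + r) := by
    rw [Nat.coprime_mul_left_add_right]
    rcases hr with rfl | rfl | rfl | rfl <;> norm_num
  rw [sum_sawComb_eq_sum_blocks hcop]
  simp only [sum_Ico_eq_sub _ (blockStart_mono _ (Nat.le_succ _)), blockPoly, sum_range_quadratic]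
  simp only [sum_range_succ, sum_range_zero, blockStart_twelve_mul_add, shift]
  rcases hr with rfl | rfl | rfl | rfl <;> norm_num <;> field_simp <;> ring

theorem stmt_12 (n : ℕ) (hn : 7 < n) (hco : Nat.Coprime n 6)
    (c : ℤ) (hc : 3 * c ≡ 1 [ZMOD (n:ℤ)]) :
    0 < 2 * dS 1 1 n - dS 1 2 n - dS 1 3 n - dS 1 4 n + dS 1 6 n
        - dS 1 (2*c) n + dS 1 (4*c) n := by
  have h2 : ¬ 2 ∣ n := (Nat.Prime.coprime_iff_not_dvd Nat.prime_two).1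
    (Nat.Coprime.coprime_dvd_right (by norm_num) hco).symm
  have h3 : Nat.Coprime 3 n := (Nat.Coprime.coprime_dvd_right (by norm_num) hco).symm
  have h3' : ¬ 3 ∣ n := (Nat.Prime.coprime_iff_not_dvd Nat.prime_three).1 h3
  have hinv : ∀ b : ℤ, b ≡ 3 * (b * c) [ZMOD n] := fun b ↦ by
    simpa [mul_left_comm] using (hc.mul_left b).symm
  rw [← dS_eq_of_modEq_mul h3 (a' := 3) (b' := 2) (by simp) (hinv 2),
    ← dS_eq_of_modEq_mul h3 (a' := 3) (b' := 4) (by simp) (hinv 4), dS_comb_eq_sum_sawComb]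
  obtain ⟨m, r, hr, rfl⟩ : ∃ m r, (r = 1 ∨ r = 5 ∨ r = 7 ∨ r = 11) ∧ n = 12 * m + r :=
    ⟨n / 12, n % 12, by omega, by omega⟩
  rw [sum_sawComb_twelve_mul_add m r hr]
  split_ifs
  · have : (1 : ℚ) ≤ m := by exact_mod_cast (show 1 ≤ m by omega)
    linarith
  · positivity
end
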